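/- Let A be a nonempty finite set, β > 0, and let π_ref be a strictly positive probability distribution on A. Define a regularized reward R(a) = β log π_ref(a) + r(a) for r : A → ℝ. Then the maximum-entropy optimal policy for R, namely π(a) = exp(R(a)/β)/∑_{a'} exp(R(a')/β), satisfies β log(π(a)/π_ref(a)) = r(a) − β log ∑_{a'} π_ref(a') exp(r(a')/β). In particular the log-probability-ratio equals the reward r up to an additive constant independent of a. -/
import Mathlib


theorem stmt_9 {A : Type*} [Fintype A] [Nonempty A] (β : ℝ) (hβ : 0 < β)
    (πref : A → ℝ) (href : ∀ a, 0 < πref a) (hsum : ∑ a, πref a = 1)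
    (r : A → ℝ) (R : A → ℝ) (hR : ∀ a, R a = β * Real.log (πref a) + r a)
    (π : A → ℝ) (hπ : ∀ a, π a = Real.exp (R a / β) / ∑ a', Real.exp (R a' / β)) :
    ∀ a, β * Real.log (π a / πref a)
        = r a - β * Real.log (∑ a', πref a' * Real.exp (r a' / β)) := by
  have hexp : ∀ a, Real.exp (R a / β) = πref a * Real.exp (r a / β) := by
    intro a
    have h1 : R a / β = Real.log (πref a) + r a / β := by
      rw [hR a]; field_simp
    rw [h1, Real.exp_add, Real.exp_log (href a)]
  have hZpos : 0 < ∑ a', πref a' * Real.exp (r a' / β) :=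
    Finset.sum_pos (fun a _ => mul_pos (href a) (Real.exp_pos _)) Finset.univ_nonempty
  intro a
  have hratio : π a / πref a
      = Real.exp (r a / β) / ∑ a', πref a' * Real.exp (r a' / β) := by
    rw [hπ a]
    simp only [hexp]
    rw [div_div, mul_comm (∑ a', πref a' * Real.exp (r a' / β)) (πref a),
      mul_div_mul_left _ _ (ne_of_gt (href a))]
  rw [hratio, Real.log_div (Real.exp_pos _).ne' (ne_of_gt hZpos), Real.log_exp]
  field_simp
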